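/- arXiv:1006.2797 — 4 statements merged into one kernel-verified Lean document; each statement's English description precedes it below -/
import Mathlib

section
/- Let (X, {R_e}, {D_v}, {f_e}) be an E-algebraic branching system and M the K-module of functions X → K. Define S_e(φ) = χ_{R_e}·(φ ∘ f_e^{-1}) and S_e^*(φ) = χ_{D_{r(e)}}·(φ ∘ f_e). Then S_e^* ∘ S_g = δ_{e,g} P_{r(e)} for all edges e, g, where P_v(φ) = χ_{D_v}·φ. -/
open scoped Classical

/-- An E-algebraic branching system for a directed graph with vertices `V`,
edges `E`, range map `r` and source map `s`, on a set (type) `X`. -/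
structure AlgBranchingSystem {V E : Type*} (r s : E → V) (X : Type*) where
  R : E → Set X
  D : V → Set X
  disjoint_R : ∀ ⦃e d : E⦄, e ≠ d → R e ∩ R d = ∅
  disjoint_D : ∀ ⦃u v : V⦄, u ≠ v → D u ∩ D v = ∅
  R_subset : ∀ e : E, R e ⊆ D (s e)
  D_eq_union : ∀ v : V, {e : E | s e = v}.Finite → {e : E | s e = v}.Nonempty →
      D v = ⋃ e ∈ {e : E | s e = v}, R e
  f : E → X → X
  g : E → X → X
  f_mapsTo : ∀ e : E, Set.MapsTo (f e) (D (r e)) (R e)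
  g_mapsTo : ∀ e : E, Set.MapsTo (g e) (R e) (D (r e))
  g_f : ∀ e : E, ∀ x ∈ D (r e), g e (f e x) = x
  f_g : ∀ e : E, ∀ x ∈ R e, f e (g e x) = x

namespace AlgBranchingSystem

variable {V E : Type*} {r s : E → V} {X : Type*} (K : Type*) [Field K]

/-- The operator `P_v : φ ↦ χ_{D_v} · φ` on the module of all functions `X → K`. -/
noncomputable def P (B : AlgBranchingSystem r s X) (v : V) : Module.End K (X → K) where
  toFun φ := (B.D v).indicator φ
  map_add' φ ψ := by
    funext x
    by_cases h : x ∈ B.D v <;> simp [Set.indicator_of_mem, Set.indicator_of_notMem, h]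
  map_smul' c φ := by
    funext x
    by_cases h : x ∈ B.D v <;> simp [Set.indicator_of_mem, Set.indicator_of_notMem, h]

/-- The operator `S_e : φ ↦ χ_{R_e} · (φ ∘ f_e⁻¹)`. -/
noncomputable def S (B : AlgBranchingSystem r s X) (e : E) : Module.End K (X → K) where
  toFun φ := (B.R e).indicator fun x => φ (B.g e x)
  map_add' φ ψ := by
    funext x
    by_cases h : x ∈ B.R e <;> simp [Set.indicator_of_mem, Set.indicator_of_notMem, h]
  map_smul' c φ := by
    funext x
    by_cases h : x ∈ B.R e <;> simp [Set.indicator_of_mem, Set.indicator_of_notMem, h]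

/-- The operator `S_e^* : φ ↦ χ_{D_{r(e)}} · (φ ∘ f_e)`. -/
noncomputable def Sstar (B : AlgBranchingSystem r s X) (e : E) : Module.End K (X → K) where
  toFun φ := (B.D (r e)).indicator fun x => φ (B.f e x)
  map_add' φ ψ := by
    funext x
    by_cases h : x ∈ B.D (r e) <;> simp [Set.indicator_of_mem, Set.indicator_of_notMem, h]
  map_smul' c φ := by
    funext x
    by_cases h : x ∈ B.D (r e) <;> simp [Set.indicator_of_mem, Set.indicator_of_notMem, h]

end AlgBranchingSystem

namespace AlgBranchingSystem

variable {V E : Type*} {r s : E → V} {X : Type*} (B : AlgBranchingSystem r s X)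

theorem f_mem_R_iff {e g : E} {x : X} (hx : x ∈ B.D (r e)) : B.f e x ∈ B.R g ↔ e = g := by
  refine ⟨fun hg => ?_, fun heg => heg ▸ B.f_mapsTo e hx⟩
  by_contra heg
  have hboth : B.f e x ∈ B.R e ∩ B.R g := ⟨B.f_mapsTo e hx, hg⟩
  rw [B.disjoint_R heg] at hboth
  exact hboth

variable (K : Type*) [Field K]

@[simp]
theorem P_apply (v : V) (φ : X → K) : B.P K v φ = (B.D v).indicator φ := rfl

@[simp]
theorem S_apply (e : E) (φ : X → K) : B.S K e φ = (B.R e).indicator fun x => φ (B.g e x) := rfl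

@[simp]
theorem Sstar_apply (e : E) (φ : X → K) :
    B.Sstar K e φ = (B.D (r e)).indicator fun x => φ (B.f e x) := rfl

theorem Sstar_comp_S_self (e : E) : B.Sstar K e * B.S K e = B.P K (r e) := by
  ext φ x
  simp only [Module.End.mul_apply, Sstar_apply, S_apply, P_apply]
  by_cases hx : x ∈ B.D (r e)
  · rw [Set.indicator_of_mem hx, Set.indicator_of_mem hx, Set.indicator_of_mem (B.f_mapsTo e hx),
      B.g_f e x hx]
  · rw [Set.indicator_of_notMem hx, Set.indicator_of_notMem hx]

theorem Sstar_comp_S_of_ne {e g : E} (heg : e ≠ g) : B.Sstar K e * B.S K g = 0 := by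
  ext φ x
  simp only [Module.End.mul_apply, Sstar_apply, S_apply, LinearMap.zero_apply, Pi.zero_apply]
  by_cases hx : x ∈ B.D (r e)
  · rw [Set.indicator_of_mem hx, Set.indicator_of_notMem (mt (B.f_mem_R_iff hx).mp heg)]
  · rw [Set.indicator_of_notMem hx]

end AlgBranchingSystem

/-- `S_e^* ∘ S_g = δ_{e,g} P_{r(e)}` for all edges `e, g`. -/
theorem Sstar_comp_S {V E : Type*} (r s : E → V) {X : Type*}
    (K : Type*) [Field K] (B : AlgBranchingSystem r s X) (e g : E) :
    B.Sstar K e * B.S K g = if e = g then B.P K (r e) else 0 := by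
  split_ifs with heg
  · subst heg
    exact B.Sstar_comp_S_self K e
  · exact B.Sstar_comp_S_of_ne K heg
end

section
/- Let E = (E^0, E^1, r, s) be a directed graph with E^0 and E^1 countable. Then there exists an E-algebraic branching system (X, {R_e}, {D_v}, {f_e}) in which X is a subset of ℝ (a union of half-open intervals), each R_e is a half-open interval of length 1, and the D_v are half-open intervals or unions of the R_e. -/
open scoped Classical

/-!
Enumerate `E ⊕ V` injectively by integers and attach to each edge and each vertex its own unit
interval `[n, n + 1)`. Take `R_e` to be the interval of `e`, and `D_v` to be the union of the
`R_e` with `s e = v` when `v` is not a sink and the interval of `v` when it is. All these sets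
are pairwise disjoint and have the cardinality of the continuum, so each `D_{r(e)}` is in
bijection with `R_e`, and these bijections serve as the maps `f_e`.
-/

open Set Function Cardinal

namespace AlgBranchingSystem

variable {V E X : Type*} {r s : E → V}

noncomputable def ofEquiv (R : E → Set X) (D : V → Set X)
    (hR : Pairwise (Disjoint on R)) (hD : Pairwise (Disjoint on D))
    (hRD : ∀ e, R e ⊆ D (s e))
    (hDR : ∀ v, {e | s e = v}.Finite → {e | s e = v}.Nonempty →
      D v = ⋃ e ∈ {e | s e = v}, R e)
    (F : ∀ e, D (r e) ≃ R e) : AlgBranchingSystem r s X where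
  R := R
  D := D
  disjoint_R _ _ h := disjoint_iff_inter_eq_empty.1 (hR h)
  disjoint_D _ _ h := disjoint_iff_inter_eq_empty.1 (hD h)
  R_subset := hRD
  D_eq_union := hDR
  f e := extend Subtype.val (fun x => (F e x : X)) id
  g e := extend Subtype.val (fun x => ((F e).symm x : X)) id
  f_mapsTo e x hx := by
    rw [Subtype.val_injective.extend_apply _ _ ⟨x, hx⟩]
    exact (F e ⟨x, hx⟩).2
  g_mapsTo e x hx := by
    rw [Subtype.val_injective.extend_apply _ _ ⟨x, hx⟩]
    exact ((F e).symm ⟨x, hx⟩).2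
  g_f e x hx := by
    rw [Subtype.val_injective.extend_apply _ _ ⟨x, hx⟩,
      Subtype.val_injective.extend_apply _ _ (F e ⟨x, hx⟩), Equiv.symm_apply_apply]
  f_g e x hx := by
    rw [Subtype.val_injective.extend_apply _ _ ⟨x, hx⟩,
      Subtype.val_injective.extend_apply _ _ ((F e).symm ⟨x, hx⟩), Equiv.apply_symm_apply]

theorem exists_of_mk_eq {α : Type*} (X : Set α) (R : E → Set α) (D : V → Set α)
    (hRX : ∀ e, R e ⊆ X) (hDX : ∀ v, D v ⊆ X)
    (hR : Pairwise (Disjoint on R)) (hD : Pairwise (Disjoint on D))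
    (hRD : ∀ e, R e ⊆ D (s e))
    (hDR : ∀ v, {e | s e = v}.Finite → {e | s e = v}.Nonempty →
      D v = ⋃ e ∈ {e | s e = v}, R e)
    (hmk : ∀ e, #(D (r e)) = #(R e)) :
    ∃ B : AlgBranchingSystem r s X,
      (∀ e, B.R e = Subtype.val ⁻¹' R e) ∧ ∀ v, B.D v = Subtype.val ⁻¹' D v := by
  have mk_preimage {A : Set α} (hA : A ⊆ X) : #(Subtype.val ⁻¹' A : Set X) = #A :=
    mk_preimage_of_injective_of_subset_range _ _ Subtype.val_injective (by simpa using hA)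
  have F e : (Subtype.val ⁻¹' D (r e) : Set X) ≃ (Subtype.val ⁻¹' R e : Set X) :=
    Cardinal.eq.1 (by rw [mk_preimage (hDX _), mk_preimage (hRX _), hmk]) |>.some
  refine ⟨ofEquiv _ _ (fun _ _ h => (hR h).preimage _) (fun _ _ h => (hD h).preimage _)
    (fun e => preimage_mono (hRD e)) (fun v hfin hne => ?_) F, fun _ => rfl, fun _ => rfl⟩
  rw [hDR v hfin hne, preimage_iUnion₂]

variable (s) (ι : E ⊕ V → ℤ)

noncomputable def unitCell (i : E ⊕ V) : Set ℝ := Ico (ι i : ℝ) (ι i + 1)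

noncomputable def vertexSet (v : V) : Set ℝ :=
  if ∃ e, s e = v then ⋃ e ∈ {e | s e = v}, unitCell ι (.inl e) else unitCell ι (.inr v)

variable {ι}

theorem pairwise_disjoint_unitCell (hι : Injective ι) : Pairwise (Disjoint on unitCell ι) :=
  (pairwise_disjoint_Ico_intCast ℝ).comp_of_injective hι

theorem mk_unitCell (i : E ⊕ V) : #(unitCell ι i) = 𝔠 :=
  mk_Ico_real (lt_add_one _)

theorem unitCell_subset_vertexSet (e : E) : unitCell ι (.inl e) ⊆ vertexSet s ι (s e) := by
  rw [vertexSet, if_pos ⟨e, rfl⟩]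
  exact subset_biUnion_of_mem (u := fun e => unitCell ι (.inl e)) rfl

/-- Each cell is owned by a vertex (an edge cell by the source of the edge), and `vertexSet s ι v`
only uses cells owned by `v`. -/
theorem vertexSet_subset_biUnion (v : V) :
    vertexSet s ι v ⊆ ⋃ i ∈ Sum.elim s id ⁻¹' {v}, unitCell ι i := by
  unfold vertexSet
  split_ifs
  · exact iUnion₂_subset fun e he => subset_biUnion_of_mem (u := unitCell ι)
      (show Sum.elim s id (.inl e) = v from he)
  · exact subset_biUnion_of_mem (u := unitCell ι) (show Sum.elim s id (.inr v) = v from rfl)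

theorem pairwise_disjoint_vertexSet (hι : Injective ι) :
    Pairwise (Disjoint on vertexSet s ι) := by
  intro u v huv
  refine .mono (vertexSet_subset_biUnion s u) (vertexSet_subset_biUnion s v) ?_
  refine disjoint_iUnion₂_left.2 fun i hi => disjoint_iUnion₂_right.2 fun j hj =>
    pairwise_disjoint_unitCell hι ?_
  rintro rfl
  exact huv (hi.symm.trans hj)

theorem mk_vertexSet (v : V) : #(vertexSet s ι v) = 𝔠 := by
  refine le_antisymm ((mk_set_le _).trans mk_real.le) ?_
  by_cases h : ∃ e, s e = v
  · obtain ⟨e, rfl⟩ := h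
    exact (mk_unitCell _).symm.le.trans (mk_le_mk_of_subset (unitCell_subset_vertexSet s e))
  · rw [vertexSet, if_neg h, mk_unitCell]

end AlgBranchingSystem

open AlgBranchingSystem in
/-- every countable graph admits an E-algebraic branching system inside `ℝ`,
where each `R_e` is a half-open interval of length `1` and each `D_v` is either a
half-open interval or the union of the `R_e` with `s(e) = v`. -/
theorem exists_branching_system_in_real {V E : Type*} (r s : E → V)
    [Countable V] [Countable E] :
    ∃ (X : Set ℝ) (B : AlgBranchingSystem r s X),
      (∀ e : E, ∃ a : ℝ, Subtype.val '' B.R e = Set.Ico a (a + 1)) ∧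
      (∀ v : V, (∃ a b : ℝ, Subtype.val '' B.D v = Set.Ico a b) ∨
        B.D v = ⋃ e ∈ {e : E | s e = v}, B.R e) := by
  obtain ⟨ι, hι⟩ := Countable.exists_injective_nat (E ⊕ V)
  set c : E ⊕ V → ℤ := fun i => ι i
  have hc : Injective c := Nat.cast_injective.comp hι
  have hX (v : V) : vertexSet s c v ⊆ ⋃ i, unitCell c i :=
    (vertexSet_subset_biUnion s v).trans (iUnion₂_subset_iUnion _ _)
  obtain ⟨B, hBR, hBD⟩ := exists_of_mk_eq (r := r) (⋃ i, unitCell c i)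
    (fun e => unitCell c (.inl e)) (vertexSet s c) (fun e => subset_iUnion _ _) hX
    ((pairwise_disjoint_unitCell hc).comp_of_injective Sum.inl_injective)
    (pairwise_disjoint_vertexSet s hc) (unitCell_subset_vertexSet s)
    (fun v _ ⟨e, he⟩ => by rw [vertexSet, if_pos ⟨e, he⟩])
    (fun e => by rw [mk_vertexSet, mk_unitCell])
  refine ⟨_, B, fun e => ⟨c (.inl e), ?_⟩, fun v => ?_⟩
  · rw [hBR, Subtype.image_preimage_coe, inter_eq_right.2 (subset_iUnion _ _)]
    rfl
  by_cases h : ∃ e, s e = v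
  · right
    simp only [hBD, hBR, vertexSet, if_pos h, preimage_iUnion₂]
  · left
    refine ⟨c (.inr v), c (.inr v) + 1, ?_⟩
    rw [hBD, Subtype.image_preimage_coe, inter_eq_right.2 (hX v), vertexSet, if_neg h]
    rfl
end

section
/- Let E be the graph with a single vertex and a single loop, so that L_K(E) ≅ K[x, x^{-1}]. Fix an irrational θ ∈ [0,1), and let f : [0,1) → [0,1) be f(t) = (t+θ) mod 1. Let M be the K-module of functions [0,1) → K and define S(φ) = φ ∘ f^{-1}, S^*(φ) = φ ∘ f. Then the K-algebra homomorphism K[x,x^{-1}] → Hom_K(M) sending x ↦ S and x^{-1} ↦ S^* is injective. -/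
/-- Rotation by `θ` on the half-open interval `[0,1)`: `t ↦ (t + θ) mod 1`. -/
noncomputable def rotMod (θ : ℝ) (t : ↥(Set.Ico (0 : ℝ) 1)) : ↥(Set.Ico (0 : ℝ) 1) :=
  ⟨Int.fract ((t : ℝ) + θ), Int.fract_nonneg _, Int.fract_lt_one _⟩

/-- The composition operator `φ ↦ φ ∘ h` on the `K`-module of all functions `A → K`. -/
def compOp (K : Type*) [Field K] {A : Type*} (h : A → A) : Module.End K (A → K) where
  toFun φ := φ ∘ h
  map_add' _ _ := rfl
  map_smul' _ _ := rfl

/-!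
An algebra map out of `K[T;T⁻¹]` is determined by the image of `T`, so `T n` acts as composition
with the rotation by `-nθ`. Composition operators `φ ↦ φ ∘ hᵢ` are linearly independent as soon as
some point `a` has pairwise distinct images `hᵢ a`: test a vanishing combination on the indicator
of one image point. For an irrational rotation every orbit is injective, since `nθ ∈ ℤ` forces
`n = 0`.
-/

namespace LaurentPolynomial

variable {R : Type*} [CommSemiring R]

theorem injective_of_linearIndependent_map_T {M : Type*} [AddCommMonoid M] [Module R M]
    (f : R[T;T⁻¹] →ₗ[R] M) (hf : LinearIndependent R fun n => f (T n)) :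
    Function.Injective f := by
  have : f = (AddMonoidAlgebra.basis ℤ R).constr R fun n => f (T n) :=
    (AddMonoidAlgebra.basis ℤ R).ext fun n => by
      rw [Module.Basis.constr_basis, AddMonoidAlgebra.basis_apply]; rfl
  rw [this]
  exact (AddMonoidAlgebra.basis ℤ R).injective_constr_of_linearIndependent hf

theorem algHom_apply_T {A : Type*} [Semiring A] [Algebra R A] (π : R[T;T⁻¹] →ₐ[R] A)
    (g : ℤ → A) (g_zero : g 0 = 1) (g_add : ∀ m n, g (m + n) = g m * g n)
    (hπ : π (T 1) = g 1) (n : ℤ) : π (T n) = g n := by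
  have hπ_neg : π (T (-1)) = g (-1) := calc
    π (T (-1)) = π (T (-1)) * (g 1 * g (-1)) := by rw [← g_add, add_neg_cancel, g_zero, mul_one]
    _ = π (T (-1 + 1)) * g (-1) := by rw [← mul_assoc, ← hπ, ← map_mul, ← T_add]
    _ = g (-1) := by rw [neg_add_cancel, T_zero, map_one, one_mul]
  induction n using Int.induction_on with
  | zero => rw [T_zero, map_one, g_zero]
  | succ n ih => rw [T_add, map_mul, ih, hπ, g_add]
  | pred n ih => rw [sub_eq_add_neg, T_add, map_mul, ih, hπ_neg, g_add]

end LaurentPolynomial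

theorem compOp_mul (K : Type*) [Field K] {A : Type*} (g h : A → A) :
    compOp K g * compOp K h = compOp K (h ∘ g) := rfl

theorem compOp_id (K : Type*) [Field K] {A : Type*} : compOp K (id : A → A) = 1 := rfl

theorem linearIndependent_compOp (K : Type*) [Field K] {ι A : Type*} (h : ι → A → A) (a : A)
    (ha : Function.Injective fun i => h i a) : LinearIndependent K fun i => compOp K (h i) := by
  classical
  refine linearIndependent_iff'.2 fun s c hc i hi => ?_
  have := congr_fun (LinearMap.congr_fun hc (Pi.single (h i a) 1)) a
  simpa [compOp, Finset.sum_apply, Pi.single_apply, ha.eq_iff, hi] using this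

theorem rotMod_comp_rotMod (a b : ℝ) : rotMod a ∘ rotMod b = rotMod (b + a) := by
  ext t
  show Int.fract (Int.fract ((t : ℝ) + b) + a) = Int.fract ((t : ℝ) + (b + a))
  exact Int.fract_eq_fract.2 ⟨-⌊(t : ℝ) + b⌋, by rw [Int.fract]; push_cast; ring⟩

theorem rotMod_zero : rotMod 0 = id := by
  ext t
  simp [rotMod, Int.fract_eq_self.2 t.2]

theorem injective_rotMod_intCast_mul {θ : ℝ} (hθ : Irrational θ) (t : ↥(Set.Ico (0 : ℝ) 1)) :
    Function.Injective fun n : ℤ => rotMod (n * θ) t := by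
  intro m n hmn
  obtain ⟨z, hz⟩ := Int.fract_eq_fract.1 (congr_arg Subtype.val hmn)
  by_contra hne
  exact (hθ.intCast_mul (sub_ne_zero.2 hne)).ne_int z (by push_cast; linarith)

theorem laurent_rep_injective_general (K : Type*) [Field K] (θ : ℝ) (hθ : Irrational θ)
    (π : LaurentPolynomial K →ₐ[K] Module.End K (↥(Set.Ico (0 : ℝ) 1) → K))
    (hx : π (LaurentPolynomial.T 1) = compOp K (rotMod (-θ))) :
    Function.Injective π := by
  have hT (n : ℤ) : π (LaurentPolynomial.T n) = compOp K (rotMod (n * -θ)) :=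
    LaurentPolynomial.algHom_apply_T π (fun n : ℤ => compOp K (rotMod (n * -θ)))
      (by rw [Int.cast_zero, zero_mul, rotMod_zero, compOp_id])
      (fun m n => by rw [compOp_mul, rotMod_comp_rotMod, Int.cast_add, add_mul])
      (by rw [Int.cast_one, one_mul, hx]) n
  refine LaurentPolynomial.injective_of_linearIndependent_map_T π.toLinearMap ?_
  simpa only [AlgHom.toLinearMap_apply, hT] using
    linearIndependent_compOp K _ ⟨0, le_rfl, one_pos⟩ (injective_rotMod_intCast_mul hθ.neg _)

/-- let `θ ∈ [0,1)` be irrational and `f(t) = (t + θ) mod 1` the corresponding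
irrational rotation of `[0,1)`.  The `K`-algebra homomorphism from the Laurent polynomials
`K[x,x⁻¹]` (the Leavitt path algebra of the graph with one vertex and one loop) to
`Hom_K(M)`, `M` the module of all functions `[0,1) → K`, sending `x ↦ S = (φ ↦ φ ∘ f⁻¹)` and
`x⁻¹ ↦ S^* = (φ ↦ φ ∘ f)`, is injective. -/
theorem laurent_rep_injective (K : Type*) [Field K] (θ : ℝ) (hθ : Irrational θ)
    (hθ0 : 0 ≤ θ) (hθ1 : θ < 1)
    (π : LaurentPolynomial K →ₐ[K] Module.End K (↥(Set.Ico (0 : ℝ) 1) → K))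
    (hx : π (LaurentPolynomial.T 1) = compOp K (rotMod (-θ)))
    (hxinv : π (LaurentPolynomial.T (-1)) = compOp K (rotMod θ)) :
    Function.Injective π :=
  laurent_rep_injective_general K θ hθ π hx
end

section
/- Let E be a row-finite directed graph and Φ : L_K(E) → Hom_K(V) a representation. Suppose there is a basis of V, compatible with the decompositions V_u = ⊕_{e: s(e)=u} V_e (V_u = Φ(u)V, V_e = Φ(e)Φ(e^*)V), which satisfies condition (B2B): for every edge e, Φ(e) maps the chosen basis of V_{r(e)} bijectively onto the chosen basis of V_e. Then the restriction Φ_1 of Φ to W = ⊕_{u∈E^0} V_u is equivalent to a representation π : L_K(E) → Hom_K(M) induced by an E-algebraic branching system, where M is the module of finitely supported K-valued functions on the index set X of the basis of W. -/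
open scoped Classical

/-- Generators of the Leavitt path algebra: vertices, edges, and ghost edges. -/
inductive LeavittGen (V E : Type*) : Type _ where
  | vertex : V → LeavittGen V E
  | edge : E → LeavittGen V E
  | ghost : E → LeavittGen V E

/-- The defining relations of the Leavitt path algebra of the graph `(V, E, r, s)`. -/
inductive LeavittRel (K : Type*) [Field K] {V E : Type*} (r s : E → V) :
    FreeAlgebra K (LeavittGen V E) → FreeAlgebra K (LeavittGen V E) → Prop where
  | vertex_mul (u v : V) : LeavittRel K r s
      (FreeAlgebra.ι K (LeavittGen.vertex u : LeavittGen V E) *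
        FreeAlgebra.ι K (LeavittGen.vertex v : LeavittGen V E))
      (if u = v then FreeAlgebra.ι K (LeavittGen.vertex u : LeavittGen V E) else 0)
  | source_mul_edge (e : E) : LeavittRel K r s
      (FreeAlgebra.ι K (LeavittGen.vertex (s e) : LeavittGen V E) *
        FreeAlgebra.ι K (LeavittGen.edge e : LeavittGen V E))
      (FreeAlgebra.ι K (LeavittGen.edge e : LeavittGen V E))
  | edge_mul_range (e : E) : LeavittRel K r s
      (FreeAlgebra.ι K (LeavittGen.edge e : LeavittGen V E) *
        FreeAlgebra.ι K (LeavittGen.vertex (r e) : LeavittGen V E))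
      (FreeAlgebra.ι K (LeavittGen.edge e : LeavittGen V E))
  | range_mul_ghost (e : E) : LeavittRel K r s
      (FreeAlgebra.ι K (LeavittGen.vertex (r e) : LeavittGen V E) *
        FreeAlgebra.ι K (LeavittGen.ghost e : LeavittGen V E))
      (FreeAlgebra.ι K (LeavittGen.ghost e : LeavittGen V E))
  | ghost_mul_source (e : E) : LeavittRel K r s
      (FreeAlgebra.ι K (LeavittGen.ghost e : LeavittGen V E) *
        FreeAlgebra.ι K (LeavittGen.vertex (s e) : LeavittGen V E))
      (FreeAlgebra.ι K (LeavittGen.ghost e : LeavittGen V E))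
  | ghost_mul_edge (e d : E) : LeavittRel K r s
      (FreeAlgebra.ι K (LeavittGen.ghost e : LeavittGen V E) *
        FreeAlgebra.ι K (LeavittGen.edge d : LeavittGen V E))
      (if e = d then FreeAlgebra.ι K (LeavittGen.vertex (r e) : LeavittGen V E) else 0)
  | cuntz_krieger (v : V) (h : {e : E | s e = v}.Finite) (hne : {e : E | s e = v}.Nonempty) :
      LeavittRel K r s
      (FreeAlgebra.ι K (LeavittGen.vertex v : LeavittGen V E))
      (∑ e ∈ h.toFinset, FreeAlgebra.ι K (LeavittGen.edge e : LeavittGen V E) *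
        FreeAlgebra.ι K (LeavittGen.ghost e : LeavittGen V E))

/-- The Leavitt path algebra `L_K(E)` of the graph `(V, E, r, s)`, presented as the
quotient of the free algebra on the generators by the Leavitt relations. -/
abbrev LeavittAlgebra (K : Type*) [Field K] {V E : Type*} (r s : E → V) :=
  RingQuot (LeavittRel K r s)

/-- The image of a vertex `v ∈ E^0` in the Leavitt path algebra. -/
noncomputable def lpaVert (K : Type*) [Field K] {V E : Type*} (r s : E → V) (v : V) :
    LeavittAlgebra K r s :=
  RingQuot.mkAlgHom K (LeavittRel K r s) (FreeAlgebra.ι K (LeavittGen.vertex v : LeavittGen V E))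

/-- The image of an edge `e ∈ E^1` in the Leavitt path algebra. -/
noncomputable def lpaEdge (K : Type*) [Field K] {V E : Type*} (r s : E → V) (e : E) :
    LeavittAlgebra K r s :=
  RingQuot.mkAlgHom K (LeavittRel K r s) (FreeAlgebra.ι K (LeavittGen.edge e : LeavittGen V E))

/-- The image of a ghost edge `e^*` in the Leavitt path algebra. -/
noncomputable def lpaGhost (K : Type*) [Field K] {V E : Type*} (r s : E → V) (e : E) :
    LeavittAlgebra K r s :=
  RingQuot.mkAlgHom K (LeavittRel K r s) (FreeAlgebra.ι K (LeavittGen.ghost e : LeavittGen V E))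

/-!
The vertex projections `Φ(u)` act on the vectors `m x` as the indicators of the sets `D u`,
which cover `X`; so independence on each `D u` gives independence on all of `X`, and
`linearCombination K m` identifies `X →₀ K` with `W`.  Condition (B2B) together with
`e^* e = r(e)` makes `Φ(e)` a bijection `f_e : D (r e) → R e` on basis vectors, with inverse
`g_e` given by `Φ(e^*)`; the relations `e = e r(e)`, `e^* = e^* s(e)` and `e^* d = 0` for
`d ≠ e` make `Φ(e)` and `Φ(e^*)` vanish on the remaining basis vectors.  Thus `Φ` acts on the
basis as the branching-system representation acts on `X →₀ K`, on generators and hence on all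
of `L_K(E)`.
-/

section Relations

variable {K : Type*} [Field K] {V E : Type*} {r s : E → V}

theorem lpaVert_mul_lpaVert (u v : V) :
    lpaVert K r s u * lpaVert K r s v = if u = v then lpaVert K r s u else 0 := by
  simpa [lpaVert, apply_ite] using
    RingQuot.mkAlgHom_rel K (LeavittRel.vertex_mul (K := K) (r := r) (s := s) u v)

theorem lpaEdge_mul_lpaVert_range (e : E) :
    lpaEdge K r s e * lpaVert K r s (r e) = lpaEdge K r s e := by
  simpa [lpaEdge, lpaVert] using
    RingQuot.mkAlgHom_rel K (LeavittRel.edge_mul_range (K := K) (r := r) (s := s) e)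

theorem lpaGhost_mul_lpaVert_source (e : E) :
    lpaGhost K r s e * lpaVert K r s (s e) = lpaGhost K r s e := by
  simpa [lpaGhost, lpaVert] using
    RingQuot.mkAlgHom_rel K (LeavittRel.ghost_mul_source (K := K) (r := r) (s := s) e)

theorem lpaGhost_mul_lpaEdge (e d : E) :
    lpaGhost K r s e * lpaEdge K r s d = if e = d then lpaVert K r s (r e) else 0 := by
  simpa [lpaGhost, lpaEdge, lpaVert, apply_ite] using
    RingQuot.mkAlgHom_rel K (LeavittRel.ghost_mul_edge (K := K) (r := r) (s := s) e d)

theorem isIdempotentElem_lpaVert (v : V) : IsIdempotentElem (lpaVert K r s v) := by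
  simpa [IsIdempotentElem] using lpaVert_mul_lpaVert (K := K) (r := r) (s := s) v v

theorem LeavittAlgebra.induction_on {p : LeavittAlgebra K r s → Prop}
    (scalar : ∀ c : K, p (algebraMap K _ c))
    (vert : ∀ v, p (lpaVert K r s v)) (edge : ∀ e, p (lpaEdge K r s e))
    (ghost : ∀ e, p (lpaGhost K r s e))
    (add : ∀ a b, p a → p b → p (a + b)) (mul : ∀ a b, p a → p b → p (a * b))
    (a : LeavittAlgebra K r s) : p a := by
  obtain ⟨a, rfl⟩ := RingQuot.mkAlgHom_surjective K (LeavittRel K r s) a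
  induction a using FreeAlgebra.induction with
  | grade0 c => simpa using scalar c
  | grade1 g => cases g <;> simp_all [lpaVert, lpaEdge, lpaGhost]
  | add a b ha hb => simpa using add _ _ ha hb
  | mul a b ha hb => simpa using mul _ _ ha hb

end Relations

namespace AlgBranchingSystem

variable {V E X : Type*} {r s : E → V} (B : AlgBranchingSystem r s X) (K : Type*) [Field K]

theorem eq_of_mem_D {u v : V} {x : X} (hu : x ∈ B.D u) (hv : x ∈ B.D v) : u = v :=
  by_contra fun h => (B.disjoint_D h).subset ⟨hu, hv⟩

theorem eq_of_mem_R {e d : E} {x : X} (he : x ∈ B.R e) (hd : x ∈ B.R d) : e = d :=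
  by_contra fun h => (B.disjoint_R h).subset ⟨he, hd⟩

-- The operators `P`, `S`, `Sstar` restricted to finitely supported functions.
noncomputable def genOp : LeavittGen V E → Module.End K (X →₀ K)
  | .vertex v => Finsupp.lsum K fun x => if x ∈ B.D v then Finsupp.lsingle x else 0
  | .edge e => Finsupp.lsum K fun x => if x ∈ B.D (r e) then Finsupp.lsingle (B.f e x) else 0
  | .ghost e => Finsupp.lsum K fun x => if x ∈ B.R e then Finsupp.lsingle (B.g e x) else 0

@[simp]
theorem genOp_vertex_single (v : V) (x : X) (c : K) :
    B.genOp K (.vertex v) (Finsupp.single x c) =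
      if x ∈ B.D v then Finsupp.single x c else 0 := by
  rw [genOp, Finsupp.lsum_single]
  split_ifs <;> rfl

@[simp]
theorem genOp_edge_single (e : E) (x : X) (c : K) :
    B.genOp K (.edge e) (Finsupp.single x c) =
      if x ∈ B.D (r e) then Finsupp.single (B.f e x) c else 0 := by
  rw [genOp, Finsupp.lsum_single]
  split_ifs <;> rfl

@[simp]
theorem genOp_ghost_single (e : E) (x : X) (c : K) :
    B.genOp K (.ghost e) (Finsupp.single x c) =
      if x ∈ B.R e then Finsupp.single (B.g e x) c else 0 := by
  rw [genOp, Finsupp.lsum_single]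
  split_ifs <;> rfl

theorem sum_ite_mem_R {v : V} (hfin : {e : E | s e = v}.Finite)
    (hne : {e : E | s e = v}.Nonempty) {M : Type*} [AddCommMonoid M] (x : X) (y : M) :
    ∑ e ∈ hfin.toFinset, (if x ∈ B.R e then y else 0) = if x ∈ B.D v then y else 0 := by
  by_cases hx : x ∈ B.D v
  · obtain ⟨e, hev, hxe⟩ : ∃ e, s e = v ∧ x ∈ B.R e := by
      simpa [B.D_eq_union v hfin hne] using hx
    rw [Finset.sum_eq_single_of_mem e (by simpa using hev), if_pos hxe, if_pos hx]
    exact fun d _ hde => if_neg fun hxd => hde (B.eq_of_mem_R hxd hxe)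
  · rw [if_neg hx]
    refine Finset.sum_eq_zero fun e he => if_neg fun hxe => hx ?_
    exact (hfin.mem_toFinset.1 he : s e = v) ▸ B.R_subset e hxe

theorem genOp_rel ⦃a b : FreeAlgebra K (LeavittGen V E)⦄ (h : LeavittRel K r s a b) :
    FreeAlgebra.lift K (B.genOp K) a = FreeAlgebra.lift K (B.genOp K) b := by
  cases h with
  | vertex_mul u v =>
    refine Finsupp.lhom_ext fun x c => ?_
    rcases eq_or_ne u v with rfl | huv
    · by_cases hx : x ∈ B.D u <;> simp [hx]
    · have : x ∈ B.D u → x ∉ B.D v := fun hu hv => huv (B.eq_of_mem_D hu hv)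
      by_cases hx : x ∈ B.D v <;> simp_all
  | source_mul_edge e =>
    refine Finsupp.lhom_ext fun x c => ?_
    by_cases hx : x ∈ B.D (r e)
    · simp [hx, B.R_subset e (B.f_mapsTo e hx)]
    · simp [hx]
  | edge_mul_range e =>
    refine Finsupp.lhom_ext fun x c => ?_
    by_cases hx : x ∈ B.D (r e) <;> simp [hx]
  | range_mul_ghost e =>
    refine Finsupp.lhom_ext fun x c => ?_
    by_cases hx : x ∈ B.R e
    · simp [hx, B.g_mapsTo e hx]
    · simp [hx]
  | ghost_mul_source e =>
    refine Finsupp.lhom_ext fun x c => ?_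
    by_cases hx : x ∈ B.R e
    · simp [hx, B.R_subset e hx]
    · by_cases hx' : x ∈ B.D (s e) <;> simp [hx, hx']
  | ghost_mul_edge e d =>
    refine Finsupp.lhom_ext fun x c => ?_
    rcases eq_or_ne e d with rfl | hed
    · by_cases hx : x ∈ B.D (r e)
      · simp [hx, B.f_mapsTo e hx, B.g_f e x hx]
      · simp [hx]
    · have : x ∈ B.D (r d) → B.f d x ∉ B.R e := fun hx he =>
        hed (B.eq_of_mem_R he (B.f_mapsTo d hx))
      by_cases hx : x ∈ B.D (r d) <;> simp_all
  | cuntz_krieger v hfin hne =>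
    refine Finsupp.lhom_ext fun x c => ?_
    have hterm : ∀ e,
        B.genOp K (.edge e) (if x ∈ B.R e then Finsupp.single (B.g e x) c else 0) =
          if x ∈ B.R e then Finsupp.single x c else 0 := fun e => by
      by_cases hx : x ∈ B.R e
      · simp [hx, B.g_mapsTo e hx, B.f_g e x hx]
      · simp [hx]
    simp [hterm, B.sum_ite_mem_R hfin hne]

noncomputable def rep : LeavittAlgebra K r s →ₐ[K] Module.End K (X →₀ K) :=
  RingQuot.liftAlgHom K ⟨FreeAlgebra.lift K (B.genOp K), B.genOp_rel K⟩

@[simp]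
theorem rep_lpaVert (v : V) : B.rep K (lpaVert K r s v) = B.genOp K (.vertex v) := by
  simp [rep, lpaVert]

@[simp]
theorem rep_lpaEdge (e : E) : B.rep K (lpaEdge K r s e) = B.genOp K (.edge e) := by
  simp [rep, lpaEdge]

@[simp]
theorem rep_lpaGhost (e : E) : B.rep K (lpaGhost K r s e) = B.genOp K (.ghost e) := by
  simp [rep, lpaGhost]

end AlgBranchingSystem

section Basis

variable {K : Type*} [Field K] {M X : Type*} [AddCommGroup M] [Module K M] {m : X → M}

theorem linearIndependent_of_projections {ι : Type*} {D : ι → Set X} (P : ι → Module.End K M)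
    (hcover : ∀ x, ∃ i, x ∈ D i) (hindep : ∀ i, LinearIndepOn K m (D i))
    (hP : ∀ i x, P i (m x) = if x ∈ D i then m x else 0) : LinearIndependent K m := by
  rw [linearIndependent_iff]
  intro l hl
  ext x
  obtain ⟨i, hx⟩ := hcover x
  have hproj : P i ∘ₗ Finsupp.linearCombination K m =
      Finsupp.linearCombination K m ∘ₗ (Finsupp.supported K K (D i)).subtype ∘ₗ
        Finsupp.restrictDom K K (D i) := by
    refine Finsupp.lhom_ext fun y c => ?_
    by_cases hy : y ∈ D i <;> simp [hP, hy]
  have hfilter : (Finsupp.restrictDom K K (D i) l : X →₀ K) = 0 := by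
    refine linearIndepOn_iff.1 (hindep i) _ (Finsupp.restrictDom K K (D i) l).2 ?_
    simpa [hl] using (LinearMap.congr_fun hproj l).symm
  simpa [hx] using DFunLike.congr_fun hfilter x

theorem range_linearCombination_eq_iSup_span {ι : Type*} {D : ι → Set X}
    (hcover : ∀ x, ∃ i, x ∈ D i) :
    LinearMap.range (Finsupp.linearCombination K m) = ⨆ i, Submodule.span K (m '' D i) := by
  rw [Finsupp.range_linearCombination, ← Set.image_univ, ← Set.iUnion_eq_univ_iff.2 hcover,
    Set.image_iUnion, Submodule.span_iUnion]

end Basis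

section Representation

variable {K : Type*} [Field K] {V E X M : Type*} {r s : E → V} [AddCommGroup M] [Module K M]
  (Φ : LeavittAlgebra K r s →ₐ[K] Module.End K M) {m : X → M}

theorem lpaVert_apply_basis {D : V → Set X} (hcover : ∀ x, ∃ u, x ∈ D u)
    (hmD : ∀ u, ∀ x ∈ D u, m x ∈ LinearMap.range (Φ (lpaVert K r s u))) (u : V) (x : X) :
    Φ (lpaVert K r s u) (m x) = if x ∈ D u then m x else 0 := by
  have hfix : ∀ v, ∀ x ∈ D v, Φ (lpaVert K r s v) (m x) = m x := fun v x hx =>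
    (LinearMap.IsIdempotentElem.mem_range_iff ((isIdempotentElem_lpaVert v).map Φ)).1
      (hmD v x hx)
  split_ifs with hx
  · exact hfix u x hx
  obtain ⟨v, hv⟩ := hcover x
  have huv : u ≠ v := fun h => hx (h ▸ hv)
  rw [← hfix v x hv, ← Module.End.mul_apply, ← map_mul, lpaVert_mul_lpaVert, if_neg huv,
    map_zero, LinearMap.zero_apply]

section BasisAdapted

variable {D : V → Set X} {R : E → Set X}
  (hvert : ∀ u x, Φ (lpaVert K r s u) (m x) = if x ∈ D u then m x else 0)
include hvert

theorem lpaEdge_apply_basis_of_notMem {e : E} {x : X} (hx : x ∉ D (r e)) :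
    Φ (lpaEdge K r s e) (m x) = 0 := by
  rw [← lpaEdge_mul_lpaVert_range, map_mul, Module.End.mul_apply, hvert, if_neg hx, map_zero]

theorem lpaGhost_apply_basis_of_notMem
    (hDeq : ∀ v : V, {e : E | s e = v}.Nonempty → D v = ⋃ e ∈ {e : E | s e = v}, R e)
    (hmR : ∀ e, ∀ x ∈ R e,
      m x ∈ LinearMap.range (Φ (lpaEdge K r s e) * Φ (lpaGhost K r s e)))
    {e : E} {x : X} (hx : x ∉ R e) : Φ (lpaGhost K r s e) (m x) = 0 := by
  by_cases hxs : x ∈ D (s e)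
  · obtain ⟨d, -, hxd⟩ : ∃ d, s d = s e ∧ x ∈ R d := by
      simpa [hDeq (s e) ⟨e, rfl⟩] using hxs
    have hed : e ≠ d := fun h => hx (h ▸ hxd)
    obtain ⟨y, hy⟩ := hmR d x hxd
    rw [← hy, Module.End.mul_apply, ← Module.End.mul_apply, ← map_mul, lpaGhost_mul_lpaEdge,
      if_neg hed, map_zero, LinearMap.zero_apply]
  · rw [← lpaGhost_mul_lpaVert_source, map_mul, Module.End.mul_apply, hvert, if_neg hxs,
      map_zero]

theorem exists_algBranchingSystem_of_B2B (hm : Function.Injective m)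
    (hdisjD : ∀ ⦃u v : V⦄, u ≠ v → D u ∩ D v = ∅)
    (hdisjR : ∀ ⦃e d : E⦄, e ≠ d → R e ∩ R d = ∅)
    (hRD : ∀ e : E, R e ⊆ D (s e))
    (hDeq : ∀ v : V, {e : E | s e = v}.Nonempty → D v = ⋃ e ∈ {e : E | s e = v}, R e)
    (hmR : ∀ e, ∀ x ∈ R e,
      m x ∈ LinearMap.range (Φ (lpaEdge K r s e) * Φ (lpaGhost K r s e)))
    (hB2B : ∀ e : E, Φ (lpaEdge K r s e) '' (m '' D (r e)) = m '' R e) :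
    ∃ B : AlgBranchingSystem r s X, B.D = D ∧ B.R = R ∧
      (∀ e x, Φ (lpaEdge K r s e) (m x) = if x ∈ D (r e) then m (B.f e x) else 0) ∧
      (∀ e x, Φ (lpaGhost K r s e) (m x) = if x ∈ R e then m (B.g e x) else 0) := by
  have hf : ∀ e x, ∃ y, x ∈ D (r e) → y ∈ R e ∧ Φ (lpaEdge K r s e) (m x) = m y := by
    intro e x
    by_cases hx : x ∈ D (r e)
    · obtain ⟨y, hy, hxy⟩ := hB2B e ▸ Set.mem_image_of_mem _ (Set.mem_image_of_mem m hx)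
      exact ⟨y, fun _ => ⟨hy, hxy.symm⟩⟩
    · exact ⟨x, fun h => absurd h hx⟩
  have hg : ∀ e x, ∃ y, x ∈ R e → y ∈ D (r e) ∧ Φ (lpaEdge K r s e) (m y) = m x := by
    intro e x
    by_cases hx : x ∈ R e
    · obtain ⟨-, ⟨y, hy, rfl⟩, hxy⟩ := (hB2B e).symm ▸ Set.mem_image_of_mem m hx
      exact ⟨y, fun _ => ⟨hy, hxy⟩⟩
    · exact ⟨x, fun h => absurd h hx⟩
  choose f hf using hf
  choose g hg using hg
  have hghost_edge :
      ∀ e, ∀ x ∈ D (r e), Φ (lpaGhost K r s e) (Φ (lpaEdge K r s e) (m x)) = m x := by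
    intro e x hx
    rw [← Module.End.mul_apply, ← map_mul, lpaGhost_mul_lpaEdge, if_pos rfl, hvert, if_pos hx]
  refine ⟨⟨R, D, hdisjR, hdisjD, hRD, fun v _ => hDeq v, f, g, fun e x hx => (hf e x hx).1,
    fun e x hx => (hg e x hx).1, fun e x hx => hm ?_, fun e x hx => hm ?_⟩, rfl, rfl, ?_, ?_⟩
  · rw [← hghost_edge e _ (hg e _ (hf e x hx).1).1, (hg e _ (hf e x hx).1).2, ← (hf e x hx).2,
      hghost_edge e x hx]
  · rw [← (hf e _ (hg e x hx).1).2, (hg e x hx).2]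
  · intro e x
    split_ifs with hx
    · exact (hf e x hx).2
    · exact lpaEdge_apply_basis_of_notMem Φ hvert hx
  · intro e x
    split_ifs with hx
    · rw [← (hg e x hx).2, hghost_edge e _ (hg e x hx).1]
    · exact lpaGhost_apply_basis_of_notMem Φ hvert hDeq hmR hx

end BasisAdapted

theorem AlgBranchingSystem.linearCombination_rep (B : AlgBranchingSystem r s X)
    (hvert : ∀ u x, Φ (lpaVert K r s u) (m x) = if x ∈ B.D u then m x else 0)
    (hedge : ∀ e x, Φ (lpaEdge K r s e) (m x) = if x ∈ B.D (r e) then m (B.f e x) else 0)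
    (hghost : ∀ e x, Φ (lpaGhost K r s e) (m x) = if x ∈ B.R e then m (B.g e x) else 0)
    (a : LeavittAlgebra K r s) :
    Finsupp.linearCombination K m ∘ₗ B.rep K a = Φ a ∘ₗ Finsupp.linearCombination K m := by
  induction a using LeavittAlgebra.induction_on with
  | scalar c => ext; simp
  | vert v => ext x; by_cases hx : x ∈ B.D v <;> simp [hvert, hx]
  | edge e => ext x; by_cases hx : x ∈ B.D (r e) <;> simp [hedge, hx]
  | ghost e => ext x; by_cases hx : x ∈ B.R e <;> simp [hghost, hx]
  | add a b ha hb => simp [LinearMap.comp_add, LinearMap.add_comp, ha, hb]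
  | mul a b ha hb =>
    simp only [map_mul, Module.End.mul_eq_comp, ← LinearMap.comp_assoc, ha]
    simp only [LinearMap.comp_assoc, hb]

end Representation

theorem restriction_equivalent_to_branching_rep_general {V E : Type*} (r s : E → V)
    (K : Type*) [Field K] {Vsp : Type*} [AddCommGroup Vsp] [Module K Vsp]
    (Φ : LeavittAlgebra K r s →ₐ[K] Module.End K Vsp)
    (X : Type*) (D : V → Set X) (R : E → Set X)
    (hdisjD : ∀ ⦃u v : V⦄, u ≠ v → D u ∩ D v = ∅)
    (hdisjR : ∀ ⦃e d : E⦄, e ≠ d → R e ∩ R d = ∅)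
    (hRD : ∀ e : E, R e ⊆ D (s e))
    (hDeq : ∀ v : V, {e : E | s e = v}.Nonempty → D v = ⋃ e ∈ {e : E | s e = v}, R e)
    (hcover : ∀ x : X, ∃ u : V, x ∈ D u)
    (m : X → Vsp)
    (hindep : ∀ u : V, LinearIndependent K (fun x : D u => m (x : X)))
    (hspanD : ∀ u : V, Submodule.span K (m '' D u) = LinearMap.range (Φ (lpaVert K r s u)))
    (hspanR : ∀ e : E, Submodule.span K (m '' R e) =
      LinearMap.range (Φ (lpaEdge K r s e) * Φ (lpaGhost K r s e)))
    (hB2B : ∀ e : E, Φ (lpaEdge K r s e) '' (m '' D (r e)) = m '' R e) :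
    let W : Submodule K Vsp := ⨆ u : V, LinearMap.range (Φ (lpaVert K r s u))
    ∃ (B : AlgBranchingSystem r s X)
      (π : LeavittAlgebra K r s →ₐ[K] Module.End K (X →₀ K))
      (U : W ≃ₗ[K] (X →₀ K)),
      B.D = D ∧ B.R = R ∧
      (∀ (v : V) (x : X), π (lpaVert K r s v) (Finsupp.single x (1 : K)) =
        if x ∈ D v then Finsupp.single x (1 : K) else 0) ∧
      (∀ (e : E) (x : X), π (lpaEdge K r s e) (Finsupp.single x (1 : K)) =
        if x ∈ D (r e) then Finsupp.single (B.f e x) (1 : K) else 0) ∧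
      (∀ (e : E) (x : X), π (lpaGhost K r s e) (Finsupp.single x (1 : K)) =
        if x ∈ R e then Finsupp.single (B.g e x) (1 : K) else 0) ∧
      ∃ hW : ∀ (a : LeavittAlgebra K r s), ∀ w ∈ W, Φ a w ∈ W,
        ∀ (a : LeavittAlgebra K r s) (w : W),
          U ⟨Φ a (w : Vsp), hW a (w : Vsp) w.2⟩ = π a (U w) := by
  intro W
  have hmD : ∀ u, ∀ x ∈ D u, m x ∈ LinearMap.range (Φ (lpaVert K r s u)) :=
    fun u x hx => hspanD u ▸ Submodule.subset_span (Set.mem_image_of_mem m hx)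
  have hmR : ∀ e, ∀ x ∈ R e,
      m x ∈ LinearMap.range (Φ (lpaEdge K r s e) * Φ (lpaGhost K r s e)) :=
    fun e x hx => hspanR e ▸ Submodule.subset_span (Set.mem_image_of_mem m hx)
  have hvert := lpaVert_apply_basis Φ hcover hmD
  have hli : LinearIndependent K m :=
    linearIndependent_of_projections (fun u => Φ (lpaVert K r s u)) hcover hindep hvert
  obtain ⟨B, rfl, rfl, hedge, hghost⟩ :=
    exists_algBranchingSystem_of_B2B Φ hvert hli.injective hdisjD hdisjR hRD hDeq hmR hB2B
  have hrep := B.linearCombination_rep Φ hvert hedge hghost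
  have hrange : LinearMap.range (Finsupp.linearCombination K m) = W :=
    (range_linearCombination_eq_iSup_span hcover).trans (iSup_congr hspanD)
  let U : W ≃ₗ[K] (X →₀ K) :=
    ((LinearEquiv.ofInjective _ hli).trans (LinearEquiv.ofEq _ _ hrange)).symm
  have hW : ∀ a, ∀ w ∈ W, Φ a w ∈ W := by
    intro a w hw
    obtain ⟨φ, rfl⟩ := hrange ▸ hw
    exact hrange ▸ ⟨B.rep K a φ, LinearMap.congr_fun (hrep a) φ⟩
  refine ⟨B, B.rep K, U, rfl, rfl, fun v x => by simp, fun e x => by simp, fun e x => by simp, hW,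
    fun a w => U.symm.injective (Subtype.ext ?_)⟩
  have hU : ∀ φ, ((U.symm φ : W) : Vsp) = Finsupp.linearCombination K m φ := fun _ => rfl
  rw [LinearEquiv.symm_apply_apply, hU, ← LinearMap.comp_apply, hrep, LinearMap.comp_apply,
    ← hU, LinearEquiv.symm_apply_apply]

/-- let `E` be row-finite and `Φ : L_K(E) → Hom_K(V)` a representation.
Suppose there is a basis `{m_x : x ∈ X}` compatible with the decompositions
`V_u = ⊕_{s(e)=u} V_e` (indexed by sets `D_u = ⊔_{s(e)=u} R_e`) satisfying condition (B2B):
`Φ(e)` maps the basis of `V_{r(e)}` bijectively onto the basis of `V_e`.  Then the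
restriction `Φ₁` of `Φ` to `W = ⊕_u V_u` is equivalent to a representation `π` of `L_K(E)`
on the module of finitely supported functions on `X` induced by an E-algebraic branching
system. -/
theorem restriction_equivalent_to_branching_rep {V E : Type*} (r s : E → V)
    (K : Type*) [Field K] {Vsp : Type*} [AddCommGroup Vsp] [Module K Vsp]
    (hrow : ∀ v : V, {e : E | s e = v}.Finite)
    (Φ : LeavittAlgebra K r s →ₐ[K] Module.End K Vsp)
    (X : Type*) (D : V → Set X) (R : E → Set X)
    (hdisjD : ∀ ⦃u v : V⦄, u ≠ v → D u ∩ D v = ∅)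
    (hdisjR : ∀ ⦃e d : E⦄, e ≠ d → R e ∩ R d = ∅)
    (hRD : ∀ e : E, R e ⊆ D (s e))
    (hDeq : ∀ v : V, {e : E | s e = v}.Nonempty → D v = ⋃ e ∈ {e : E | s e = v}, R e)
    (hcover : ∀ x : X, ∃ u : V, x ∈ D u)
    (m : X → Vsp)
    (hindep : ∀ u : V, LinearIndependent K (fun x : D u => m (x : X)))
    (hspanD : ∀ u : V, Submodule.span K (m '' D u) = LinearMap.range (Φ (lpaVert K r s u)))
    (hspanR : ∀ e : E, Submodule.span K (m '' R e) =
      LinearMap.range (Φ (lpaEdge K r s e) * Φ (lpaGhost K r s e)))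
    (hB2B : ∀ e : E, Φ (lpaEdge K r s e) '' (m '' D (r e)) = m '' R e) :
    let W : Submodule K Vsp := ⨆ u : V, LinearMap.range (Φ (lpaVert K r s u))
    ∃ (B : AlgBranchingSystem r s X)
      (π : LeavittAlgebra K r s →ₐ[K] Module.End K (X →₀ K))
      (U : W ≃ₗ[K] (X →₀ K)),
      B.D = D ∧ B.R = R ∧
      (∀ (v : V) (x : X), π (lpaVert K r s v) (Finsupp.single x (1 : K)) =
        if x ∈ D v then Finsupp.single x (1 : K) else 0) ∧
      (∀ (e : E) (x : X), π (lpaEdge K r s e) (Finsupp.single x (1 : K)) =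
        if x ∈ D (r e) then Finsupp.single (B.f e x) (1 : K) else 0) ∧
      (∀ (e : E) (x : X), π (lpaGhost K r s e) (Finsupp.single x (1 : K)) =
        if x ∈ R e then Finsupp.single (B.g e x) (1 : K) else 0) ∧
      ∃ hW : ∀ (a : LeavittAlgebra K r s), ∀ w ∈ W, Φ a w ∈ W,
        ∀ (a : LeavittAlgebra K r s) (w : W),
          U ⟨Φ a (w : Vsp), hW a (w : Vsp) w.2⟩ = π a (U w) :=
  restriction_equivalent_to_branching_rep_general r s K Φ X D R hdisjD hdisjR hRD hDeq hcover m
    hindep hspanD hspanR hB2B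
end
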